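/- (1-dimensional algebraic Poincaré lemma, part 2) With A = k[u₀, u₁, …], ∂ the total derivative (∂u_j = u_{j+1}), and E the Euler operator E(f) = Σ_j (−1)^j ∂^j(∂f/∂u_j): if E(f) = 0 then f = c + ∂(g) for some constant c ∈ k and some g ∈ A. Hence ker E = k ⊕ ∂(A). -/

import Mathlib

/-- The total derivative `∂` on `A = k[u₀,u₁,u₂,…]`: the unique derivation with
`∂ u_j = u_{j+1}`. -/
noncomputable def totalDer (k : Type*) [CommRing k] :
    Derivation k (MvPolynomial ℕ k) (MvPolynomial ℕ k) :=
  MvPolynomial.mkDerivation k fun j => MvPolynomial.X (j + 1)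

/-- The Euler operator `E f = ∑_{j≥0} (−1)^j ∂^j (∂f/∂u_j)`. -/
noncomputable def eulerOp (k : Type*) [CommRing k] (f : MvPolynomial ℕ k) :
    MvPolynomial ℕ k :=
  ∑ᶠ j : ℕ, ((-1 : ℤ) ^ j) • ((fun g => totalDer k g)^[j] (MvPolynomial.pderiv j f))

/-!
Integrating by parts `j` times gives `u₀ · ∂ʲh ≡ (-1)ʲ u_j · h` modulo `∂A`, hence
`u₀ · E f ≡ N f` for the counting derivation `N = ∑ u_j ∂/∂u_j`; so `E f = 0` puts `N f` in `∂A`.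
This replaces the homotopy formula `f - f(0) = ∫₀¹ (N f)(λu) dλ/λ`: since `∂` preserves total
degree, `∂A` contains every homogeneous component of its elements, and `N` multiplies the degree
`d` component of `f` by `d`. In characteristic zero all components of `f` of positive degree
therefore lie in `∂A`, and only the constant term is left.
-/

namespace MvPolynomial

variable {σ R : Type*} [CommSemiring R]

theorem homogeneousComponent_linearMap_apply (L : MvPolynomial σ R →ₗ[R] MvPolynomial σ R)
    (hL : ∀ n p, IsHomogeneous p n → IsHomogeneous (L p) n) (d : ℕ) (p : MvPolynomial σ R) :
    homogeneousComponent d (L p) = L (homogeneousComponent d p) := by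
  classical
  conv_lhs => rw [← p.sum_homogeneousComponent]
  rw [map_sum, map_sum, Finset.sum_congr rfl fun e _ =>
    homogeneousComponent_of_mem (hL e _ (homogeneousComponent_isHomogeneous e p)),
    Finset.sum_ite_eq]
  split_ifs with hd
  · rfl
  · rw [homogeneousComponent_eq_zero _ _ (by simpa [Nat.lt_succ_iff] using hd), map_zero]

theorem homogeneousComponent_mem_range {L : MvPolynomial σ R →ₗ[R] MvPolynomial σ R}
    (hL : ∀ n p, IsHomogeneous p n → IsHomogeneous (L p) n) (d : ℕ) {p : MvPolynomial σ R}
    (hp : p ∈ LinearMap.range L) : homogeneousComponent d p ∈ LinearMap.range L := by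
  obtain ⟨q, rfl⟩ := hp
  exact ⟨homogeneousComponent d q, (homogeneousComponent_linearMap_apply L hL d q).symm⟩

theorem IsHomogeneous.derivation {D : Derivation R (MvPolynomial σ R) (MvPolynomial σ R)}
    (hD : ∀ i, (D (X i)).IsHomogeneous 1) {p : MvPolynomial σ R} {n : ℕ}
    (hp : p.IsHomogeneous n) : (D p).IsHomogeneous n := by
  have hDX : D = mkDerivation R (fun i => D (X i)) := derivation_ext fun i => by simp
  rw [← mem_homogeneousSubmodule, homogeneousSubmodule_eq_finsupp_supported,
    AddMonoidAlgebra.supported_eq_span_single] at hp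
  induction hp using Submodule.span_induction with
  | mem _ hm =>
    obtain ⟨m, hm, rfl⟩ := hm
    dsimp only
    rw [single_eq_monomial, hDX, mkDerivation_monomial, one_smul]
    refine IsHomogeneous.sum _ _ _ fun i hi => ?_
    have hdeg : Finsupp.degree (m - Finsupp.single i 1) + 1 = n := by
      rw [← hm, Finsupp.degree_eq_weight_one]
      exact Finsupp.weight_sub_single_add (Finsupp.mem_support_iff.mp hi)
    dsimp only
    rw [← hdeg, smul_eq_mul]
    exact (isHomogeneous_monomial _ rfl).mul (hD i)
  | zero => simpa using isHomogeneous_zero σ R n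
  | add p q _ _ hp hq => rw [map_add]; exact hp.add hq
  | smul r p _ hp => rw [D.map_smul]; exact (homogeneousSubmodule σ R n).smul_mem r hp

variable (σ R) in
noncomputable def countingDer : Derivation R (MvPolynomial σ R) (MvPolynomial σ R) :=
  mkDerivation R X

theorem countingDer_eq_sum_X_mul_pderiv {p : MvPolynomial σ R} {s : Finset σ} (hs : p.vars ⊆ s) :
    countingDer σ R p = ∑ i ∈ s, X i * pderiv i p := by
  classical
  let D : Derivation R (MvPolynomial σ R) (MvPolynomial σ R) :=
    ∑ i ∈ s, (X i : MvPolynomial σ R) • pderiv i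
  have hD (q : MvPolynomial σ R) : D q = ∑ i ∈ s, X i * pderiv i q := by
    simp only [D, ← Derivation.coeFnAddMonoidHom_apply, map_sum, Finset.sum_apply]
    rfl
  rw [← hD]
  refine derivation_eq_of_forall_mem_vars fun j hj => ?_
  rw [hD]
  simp [countingDer, pderiv_X, Pi.single_apply, hs hj]

theorem countingDer_monomial (m : σ →₀ ℕ) (r : R) :
    countingDer σ R (monomial m r) = m.degree • monomial m r := by
  classical
  by_cases hr : r = 0
  · simp [hr]
  rw [countingDer_eq_sum_X_mul_pderiv (vars_monomial hr).le, Finsupp.degree_apply, Finset.sum_smul]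
  exact Finset.sum_congr rfl fun i _ => X_mul_pderiv_monomial

theorem countingDer_of_isHomogeneous {p : MvPolynomial σ R} {n : ℕ} (hp : p.IsHomogeneous n) :
    countingDer σ R p = n • p := by
  rw [← mem_homogeneousSubmodule, homogeneousSubmodule_eq_finsupp_supported,
    AddMonoidAlgebra.supported_eq_span_single] at hp
  induction hp using Submodule.span_induction with
  | mem _ hm =>
    obtain ⟨m, hm, rfl⟩ := hm
    rw [← hm]
    exact countingDer_monomial m 1
  | zero => simp
  | add p q _ _ hp hq => rw [map_add, hp, hq, smul_add]
  | smul r p _ hp => rw [(countingDer σ R).map_smul, hp, smul_comm]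

theorem homogeneousComponent_countingDer (d : ℕ) (p : MvPolynomial σ R) :
    homogeneousComponent d (countingDer σ R p) = d • homogeneousComponent d p := by
  have hX (i : σ) : (countingDer σ R (X i)).IsHomogeneous 1 := by
    simpa [countingDer] using isHomogeneous_X R i
  rw [← countingDer_of_isHomogeneous (homogeneousComponent_isHomogeneous d p)]
  exact homogeneousComponent_linearMap_apply _ (fun _ _ hp => hp.derivation hX) d p

theorem sub_C_coeff_zero_mem_range_of_countingDer_mem_range {k : Type*} [Field k] [CharZero k]
    {D : Derivation k (MvPolynomial σ k) (MvPolynomial σ k)}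
    (hD : ∀ i, (D (X i)).IsHomogeneous 1) {f : MvPolynomial σ k}
    (hf : countingDer σ k f ∈ LinearMap.range (D : MvPolynomial σ k →ₗ[k] MvPolynomial σ k)) :
    f - C (coeff 0 f) ∈ LinearMap.range (D : MvPolynomial σ k →ₗ[k] MvPolynomial σ k) := by
  classical
  have hcomp (d : ℕ) (hd : d ≠ 0) :
      homogeneousComponent d f ∈ LinearMap.range (D : MvPolynomial σ k →ₗ[k] MvPolynomial σ k) := by
    have := homogeneousComponent_mem_range (fun _ _ hp => hp.derivation hD) d hf
    rw [homogeneousComponent_countingDer, ← Nat.cast_smul_eq_nsmul k] at this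
    exact (Submodule.smul_mem_iff _ (Nat.cast_ne_zero.mpr hd)).mp this
  have hsplit : f - C (coeff 0 f)
      = ∑ d ∈ (Finset.range (f.totalDegree + 1)).erase 0, homogeneousComponent d f := by
    rw [← homogeneousComponent_zero, sub_eq_iff_eq_add',
      Finset.add_sum_erase _ (homogeneousComponent · f) (by simp), sum_homogeneousComponent]
  rw [hsplit]
  exact Submodule.sum_mem _ fun d hd => hcomp d (Finset.ne_of_mem_erase hd)

end MvPolynomial

theorem Derivation.mul_iterate_sub_iterate_mul_mem_range {R A : Type*} [CommRing R]
    [CommRing A] [Algebra R A] (D : Derivation R A A) (a g : A) (j : ℕ) :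
    a * D^[j] g - (-1 : ℤ) ^ j • (D^[j] a * g) ∈ LinearMap.range (D : A →ₗ[R] A) := by
  induction j generalizing g with
  | zero => simp
  | succ j ih =>
    have hstep : a * D^[j + 1] g - (-1 : ℤ) ^ (j + 1) • (D^[j + 1] a * g)
        = (a * D^[j] (D g) - (-1 : ℤ) ^ j • (D^[j] a * D g))
          + (-1 : ℤ) ^ j • D (D^[j] a * g) := by
      rw [Function.iterate_succ_apply, Function.iterate_succ_apply', D.leibniz]
      simp only [zsmul_eq_mul, smul_eq_mul]
      push_cast
      ring
    rw [hstep]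
    exact add_mem (ih _) (zsmul_mem (LinearMap.mem_range_self _ _) _)

open MvPolynomial

section TotalDerivative

variable {k : Type*} [CommRing k]

@[simp]
theorem totalDer_X (i : ℕ) : totalDer k (X i) = X (i + 1) :=
  mkDerivation_X _ _ _

theorem iterate_totalDer_X (j i : ℕ) : (totalDer k)^[j] (X i) = X (i + j) := by
  induction j with
  | zero => rfl
  | succ j ih => rw [Function.iterate_succ_apply', ih, totalDer_X, add_assoc]

theorem eulerOp_eq_sum (f : MvPolynomial ℕ k) :
    eulerOp k f = ∑ j ∈ f.vars, (-1 : ℤ) ^ j • (totalDer k)^[j] (pderiv j f) := by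
  refine finsum_eq_sum_of_support_subset _ fun j hj => ?_
  by_contra hj'
  rw [Function.mem_support, pderiv_eq_zero_of_notMem_vars hj', iterate_map_zero, smul_zero] at hj
  exact hj rfl

theorem X_zero_mul_eulerOp_sub_countingDer_mem_range (f : MvPolynomial ℕ k) :
    X 0 * eulerOp k f - countingDer ℕ k f
      ∈ LinearMap.range (totalDer k : MvPolynomial ℕ k →ₗ[k] _) := by
  rw [eulerOp_eq_sum, countingDer_eq_sum_X_mul_pderiv subset_rfl, Finset.mul_sum,
    ← Finset.sum_sub_distrib]
  refine Submodule.sum_mem _ fun j _ => ?_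
  have := zsmul_mem ((totalDer k).mul_iterate_sub_iterate_mul_mem_range (X 0) (pderiv j f) j)
    ((-1 : ℤ) ^ j)
  rwa [smul_sub, smul_smul, ← pow_add, Even.neg_one_pow ⟨j, rfl⟩, one_smul, iterate_totalDer_X,
    zero_add, ← mul_smul_comm] at this

end TotalDerivative

/-- 1-dimensional algebraic Poincaré lemma, part 2: in characteristic 0, if `E f = 0` then
`f = c + ∂ g` for some constant `c ∈ k` and some polynomial `g`; hence
`ker E = k ⊕ ∂(A)`. -/
theorem stmt_11 (k : Type*) [Field k] [CharZero k] (f : MvPolynomial ℕ k)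
    (hf : eulerOp k f = 0) :
    ∃ (c : k) (g : MvPolynomial ℕ k), f = MvPolynomial.C c + totalDer k g := by
  have hN : countingDer ℕ k f ∈ LinearMap.range (totalDer k : MvPolynomial ℕ k →ₗ[k] _) := by
    simpa [hf] using X_zero_mul_eulerOp_sub_countingDer_mem_range f
  obtain ⟨g, hg⟩ := sub_C_coeff_zero_mem_range_of_countingDer_mem_range
    (fun i => by simpa using isHomogeneous_X k (i + 1)) hN
  exact ⟨coeff 0 f, g, eq_add_of_sub_eq' hg.symm⟩
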